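/- The helicity ±2 polarization sum for a spin-2 field is given by transverse projectors: for all indices i, j, m, n, ∑_{h ∈ {+2,−2}} e^{(h)}ᵢⱼ(k̂) · e^{(h)}ₘₙ(−k̂) = πᵢₘ·πⱼₙ + πᵢₙ·πⱼₘ − πᵢⱼ·πₘₙ, where πᵢⱼ = δᵢⱼ − k̂ᵢk̂ⱼ. -/

import Mathlib

open Complex

/-- Dot product on `ℝ³` realized as `Fin 3 → ℝ`. -/
noncomputable def dotR (u v : Fin 3 → ℝ) : ℝ := ∑ i, u i * v i

/-- The complex polarization vectors
`ê^±(k̂)ᵢ = (n̂ᵢ − (n̂·k̂)k̂ᵢ ± i(k̂×n̂)ᵢ)/√(2(1 − (n̂·k̂)²))`,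
with the sign `s = ±1` labelling the helicity. -/
noncomputable def polVec (n k : Fin 3 → ℝ) (s : ℝ) : Fin 3 → ℂ := fun i =>
  (((n i - dotR n k * k i : ℝ) : ℂ) +
      (s : ℂ) * Complex.I * (((crossProduct k n) i : ℝ) : ℂ)) /
    ((Real.sqrt (2 * (1 - (dotR n k) ^ 2)) : ℝ) : ℂ)

/-- The spin-2 polarization tensors:
`e⁽⁰⁾ᵢⱼ = √3(k̂ᵢk̂ⱼ − δᵢⱼ/3)`, `e⁽±¹⁾ᵢⱼ = i(k̂ᵢ·ê^±ⱼ + k̂ⱼ·ê^±ᵢ)`,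
`e⁽±²⁾ᵢⱼ = √2·ê^±ᵢ·ê^±ⱼ`, labelled by the helicity `h ∈ {−2,−1,0,1,2} ⊆ ℤ`. -/
noncomputable def polTen2 (n k : Fin 3 → ℝ) (h : ℤ) : Fin 3 → Fin 3 → ℂ :=
  if h = 0 then
    fun i j => ((Real.sqrt 3 : ℝ) : ℂ) *
      (((k i : ℝ) : ℂ) * ((k j : ℝ) : ℂ) - if i = j then (1 : ℂ)/3 else 0)
  else if h = 1 then
    fun i j => Complex.I *
      (((k i : ℝ) : ℂ) * polVec n k 1 j + ((k j : ℝ) : ℂ) * polVec n k 1 i)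
  else if h = -1 then
    fun i j => Complex.I *
      (((k i : ℝ) : ℂ) * polVec n k (-1) j + ((k j : ℝ) : ℂ) * polVec n k (-1) i)
  else if h = 2 then
    fun i j => ((Real.sqrt 2 : ℝ) : ℂ) * polVec n k 1 i * polVec n k 1 j
  else if h = -2 then
    fun i j => ((Real.sqrt 2 : ℝ) : ℂ) * polVec n k (-1) i * polVec n k (-1) j
  else 0

/-- The transverse projector `πᵢⱼ = δᵢⱼ − k̂ᵢk̂ⱼ`. -/
noncomputable def projT (k : Fin 3 → ℝ) (i j : Fin 3) : ℝ :=
  (if i = j then 1 else 0) - k i * k j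

/-!
Write `c = n̂·k̂`, `a = n̂ − c k̂` and `b = k̂ × n̂`, so that `ê^±(k̂) = (a ± i b)/N`. Reversing `k̂`
fixes `a` and flips `b`, hence `ê^±(−k̂) = ê^∓(k̂)`, and the helicity sum becomes
`2/N⁴ · ((a+ib)ᵢ(a+ib)ⱼ(a−ib)ₘ(a−ib)ₙ + c.c.)`. Since `(a+ib)ₓ(a−ib)_y = Q_{xy} + i B_{xy}` with
`Q = aaᵀ + bbᵀ` and `B = baᵀ − abᵀ`, this is `4/N⁴ · (QᵢₘQⱼₙ − BᵢₘBⱼₙ)`, and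
`BᵢₘBⱼₙ = QᵢⱼQₘₙ − QᵢₙQⱼₘ` identically. Finally Lagrange's identity for `k̂ × n̂` gives
`Q = (1 − c²) π`, while `N⁴ = 4(1 − c²)²`.
-/

lemma dotR_eq_dotProduct (u v : Fin 3 → ℝ) : dotR u v = u ⬝ᵥ v := rfl

lemma one_sub_dotR_sq_eq_cross {n k : Fin 3 → ℝ} (hk : dotR k k = 1) (hn : dotR n n = 1) :
    1 - dotR n k ^ 2 = dotR (crossProduct k n) (crossProduct k n) := by
  simp only [dotR_eq_dotProduct] at *
  rw [cross_dot_cross, hk, hn, dotProduct_comm k n]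
  ring

lemma one_sub_dotR_sq_pos {n k : Fin 3 → ℝ} (hk : dotR k k = 1) (hn : dotR n n = 1)
    (hkn : dotR n k ^ 2 ≠ 1) : 0 < 1 - dotR n k ^ 2 := by
  refine lt_of_le_of_ne ?_ (sub_ne_zero.2 hkn.symm).symm
  rw [one_sub_dotR_sq_eq_cross hk hn]
  exact Finset.sum_nonneg fun x _ => mul_self_nonneg _

lemma cross_mul_cross_apply (k n : Fin 3 → ℝ) (i j : Fin 3) :
    crossProduct k n i * crossProduct k n j =
      (dotR k k * dotR n n - dotR n k ^ 2) * (if i = j then 1 else 0)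
        - dotR k k * (n i * n j) - dotR n n * (k i * k j)
        + dotR n k * (k i * n j + n i * k j) := by
  fin_cases i <;> fin_cases j <;>
    simp only [cross_apply, dotR, Fin.sum_univ_three, Fin.isValue, Fin.zero_eta, Fin.mk_one,
      Fin.reduceFinMk, Matrix.cons_val_zero, Matrix.cons_val_one, Matrix.cons_val, Fin.reduceEq,
      reduceIte] <;> ring

lemma transverse_gram_eq_projT {n k : Fin 3 → ℝ} (hk : dotR k k = 1) (hn : dotR n n = 1)
    (i j : Fin 3) :
    (n i - dotR n k * k i) * (n j - dotR n k * k j) + crossProduct k n i * crossProduct k n j =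
      (1 - dotR n k ^ 2) * projT k i j := by
  rw [cross_mul_cross_apply, hk, hn, projT]
  ring

lemma polVec_neg (n k : Fin 3 → ℝ) (s : ℝ) : polVec n (-k) s = polVec n k (-s) := by
  have hd : dotR n (-k) = -dotR n k := by simp [dotR]
  ext i
  simp only [polVec, hd, map_neg, LinearMap.neg_apply, Pi.neg_apply, neg_sq]
  push_cast
  ring

lemma polTen2_two (n k : Fin 3 → ℝ) (i j : Fin 3) :
    polTen2 n k 2 i j = ((Real.sqrt 2 : ℝ) : ℂ) * polVec n k 1 i * polVec n k 1 j := by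
  simp [polTen2]

lemma polTen2_neg_two (n k : Fin 3 → ℝ) (i j : Fin 3) :
    polTen2 n k (-2) i j = ((Real.sqrt 2 : ℝ) : ℂ) * polVec n k (-1) i * polVec n k (-1) j := by
  simp [polTen2]

lemma quartic_add_conj_eq_of_gram {ι : Type*} (a b : ι → ℝ) (Q : ι → ι → ℝ)
    (hQ : ∀ x y, a x * a y + b x * b y = Q x y) (i j m m' : ι) :
    ((a i : ℂ) + I * b i) * (a j + I * b j) * (a m - I * b m) * (a m' - I * b m') +
      ((a i : ℂ) - I * b i) * (a j - I * b j) * (a m + I * b m) * (a m' + I * b m') =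
      2 * ((Q i m * Q j m' + Q i m' * Q j m - Q i j * Q m m' : ℝ) : ℂ) := by
  set B : ι → ι → ℝ := fun x y => b x * a y - a x * b y
  have hplus : ∀ x y, ((a x : ℂ) + I * b x) * (a y - I * b y) = Q x y + I * B x y := by
    intro x y
    simp only [← hQ, B]
    push_cast
    linear_combination -((b x : ℂ) * b y) * I_sq
  have hminus : ∀ x y, ((a x : ℂ) - I * b x) * (a y + I * b y) = Q x y - I * B x y := by
    intro x y
    simp only [← hQ, B]
    push_cast
    linear_combination -((b x : ℂ) * b y) * I_sq
  have hB : B i m * B j m' = Q i j * Q m m' - Q i m' * Q j m := by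
    simp only [← hQ, B]
    ring
  calc _ = (((a i : ℂ) + I * b i) * (a m - I * b m)) * ((a j + I * b j) * (a m' - I * b m')) +
          (((a i : ℂ) - I * b i) * (a m + I * b m)) * ((a j - I * b j) * (a m' + I * b m')) := by
        ring
    _ = 2 * ((Q i m * Q j m' - B i m * B j m' : ℝ) : ℂ) := by
        rw [hplus, hplus, hminus, hminus]
        push_cast
        linear_combination 2 * ((B i m : ℂ) * B j m') * I_sq
    _ = _ := by rw [hB]; push_cast; ring

/-- The helicity `±2` polarization sum for a spin-2 field:
`∑_{h∈{+2,−2}} e^{(h)}ᵢⱼ(k̂)·e^{(h)}ₘₙ(−k̂) = πᵢₘπⱼₙ + πᵢₙπⱼₘ − πᵢⱼπₘₙ`. -/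
theorem polTen2_sum_helicity_two (n k : Fin 3 → ℝ)
    (hk : dotR k k = 1) (hn : dotR n n = 1) (hkn : (dotR n k) ^ 2 ≠ 1)
    (i j m m' : Fin 3) :
    polTen2 n k 2 i j * polTen2 n (fun l => -k l) 2 m m' +
      polTen2 n k (-2) i j * polTen2 n (fun l => -k l) (-2) m m' =
      ((projT k i m * projT k j m' + projT k i m' * projT k j m -
          projT k i j * projT k m m' : ℝ) : ℂ) := by
  have hc := one_sub_dotR_sq_pos hk hn hkn
  set c := dotR n k
  set N := Real.sqrt (2 * (1 - c ^ 2))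
  set a : Fin 3 → ℝ := fun x => n x - c * k x
  set b := crossProduct k n
  have hN : (N : ℂ) ^ 2 = 2 * (1 - c ^ 2) := by
    norm_cast; exact Real.sq_sqrt (by linarith)
  have hN0 : (N : ℂ) ≠ 0 := by
    norm_cast; positivity
  have hsqrt2 : ((Real.sqrt 2 : ℝ) : ℂ) ^ 2 = 2 := by norm_cast; simp
  have hv : ∀ (s : ℝ) x, polVec n k s x = ((a x : ℂ) + s * I * b x) / N := fun _ _ => rfl
  have key := quartic_add_conj_eq_of_gram a b (fun x y => (1 - c ^ 2) * projT k x y)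
    (transverse_gram_eq_projT hk hn) i j m m'
  rw [show (fun l => -k l) = -k from rfl]
  simp only [polTen2_two, polTen2_neg_two, polVec_neg, neg_neg, hv]
  push_cast at key ⊢
  field_simp
  simp only [← sub_eq_add_neg]
  rw [hsqrt2, key, show (N : ℂ) ^ 4 = (N ^ 2) ^ 2 by ring, hN]
  ring
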